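/- Let a, b ∈ ℂ with a ≠ 0 and b ≠ 0, and let t ∈ ℂ with t ≠ 0. The restriction of L(z,w) = az + bw to the fiber G⁻¹(t) of G(z,w) = z + z²w is a proper map to ℂ: if a sequence of points in G⁻¹(t) tends to infinity, then L of the sequence tends to infinity. -/

import Mathlib

/-!
On the fiber `z + z²w = t` we have `w = (t - z)/z²`, so `‖w‖ ≤ ‖t‖ + 1` as soon as `‖z‖ ≥ 1`.
Hence a bound on `‖az + bw‖` bounds `‖az‖` (trivially when `‖z‖ ≤ 1`, through the bound on `w`
otherwise), and then `‖bw‖` as well. As `a, b ≠ 0`, preimages of bounded sets are bounded; the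
fiber being closed in the proper space `ℂ²`, preimages of compact sets are compact.
-/

open Bornology Metric

theorem isProperMap_restrict_of_isBounded {X Y : Type*} [PseudoMetricSpace X] [ProperSpace X]
    [TopologicalSpace Y] [T2Space Y] [CompactlyCoherentSpace Y] {f : X → Y} {s : Set X}
    (hs : IsClosed s) (hf : Continuous f) (h : ∀ K, IsCompact K → IsBounded (s ∩ f ⁻¹' K)) :
    IsProperMap (fun x : s => f x) := by
  refine isProperMap_iff_isCompact_preimage.mpr ⟨by fun_prop, fun K hK => ?_⟩
  have : Subtype.val '' ((fun x : s => f x) ⁻¹' K) = s ∩ f ⁻¹' K := by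
    ext x; simp [and_comm]
  rw [Subtype.isCompact_iff, this]
  exact isCompact_of_isClosed_isBounded (hs.inter (hK.isClosed.preimage hf)) (h K hK)

section Fiber

variable {𝕜 : Type*} [NormedDivisionRing 𝕜]

theorem norm_le_of_add_sq_mul_eq {z w t : 𝕜} (h : z + z ^ 2 * w = t) (hz : 1 ≤ ‖z‖) :
    ‖w‖ ≤ ‖t‖ + 1 := by
  have hz2 : 1 ≤ ‖z‖ ^ 2 := one_le_pow₀ hz
  refine le_of_mul_le_mul_left ?_ (zero_lt_one.trans_le hz2)
  calc ‖z‖ ^ 2 * ‖w‖ = ‖t - z‖ := by rw [← h, add_sub_cancel_left, norm_mul, norm_pow]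
    _ ≤ ‖t‖ + ‖z‖ := norm_sub_le _ _
    _ ≤ ‖z‖ ^ 2 * (‖t‖ + 1) := by nlinarith [norm_nonneg t]

theorem norm_mul_le_max_of_add_sq_mul_eq {a b z w t : 𝕜} (h : z + z ^ 2 * w = t) :
    ‖a‖ * ‖z‖ ≤ max ‖a‖ (‖a * z + b * w‖ + ‖b‖ * (‖t‖ + 1)) := by
  rcases le_or_gt ‖z‖ 1 with hz | hz
  · exact le_max_of_le_left (mul_le_of_le_one_right (norm_nonneg a) hz)
  refine le_max_of_le_right ?_
  calc ‖a‖ * ‖z‖ = ‖(a * z + b * w) - b * w‖ := by rw [add_sub_cancel_right, norm_mul]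
    _ ≤ ‖a * z + b * w‖ + ‖b‖ * ‖w‖ := (norm_sub_le _ _).trans_eq (by rw [norm_mul])
    _ ≤ ‖a * z + b * w‖ + ‖b‖ * (‖t‖ + 1) := by
      gcongr; exact norm_le_of_add_sq_mul_eq h hz.le

theorem isBounded_fiber_inter_preimage {a b t : 𝕜} (ha : a ≠ 0) (hb : b ≠ 0) {K : Set 𝕜}
    (hK : IsBounded K) :
    IsBounded ({p : 𝕜 × 𝕜 | p.1 + p.1 ^ 2 * p.2 = t} ∩ (fun p => a * p.1 + b * p.2) ⁻¹' K) := by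
  obtain ⟨M, hM⟩ := hK.exists_norm_le
  set R := max ‖a‖ (M + ‖b‖ * (‖t‖ + 1))
  refine ((isBounded_closedBall (x := 0) (r := R / ‖a‖)).prod
    (isBounded_closedBall (x := 0) (r := (M + R) / ‖b‖))).subset ?_
  rintro ⟨z, w⟩ ⟨hzw, hL⟩
  have hL : ‖a * z + b * w‖ ≤ M := hM _ hL
  have haz : ‖a‖ * ‖z‖ ≤ R := (norm_mul_le_max_of_add_sq_mul_eq (b := b) hzw).trans
    (max_le_max_left _ (by linarith))
  have hbw : ‖b‖ * ‖w‖ ≤ M + R :=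
    calc ‖b‖ * ‖w‖ = ‖(a * z + b * w) - a * z‖ := by rw [add_sub_cancel_left, norm_mul]
      _ ≤ ‖a * z + b * w‖ + ‖a‖ * ‖z‖ := (norm_sub_le _ _).trans_eq (by rw [norm_mul])
      _ ≤ M + R := add_le_add hL haz
  simp only [Set.mem_prod, mem_closedBall_zero_iff]
  exact ⟨(le_div_iff₀' (norm_pos_iff.mpr ha)).mpr haz, (le_div_iff₀' (norm_pos_iff.mpr hb)).mpr hbw⟩

end Fiber

theorem stmt_6_general (a b t : ℂ) (ha : a ≠ 0) (hb : b ≠ 0) :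
    IsProperMap (fun p : {p : ℂ × ℂ // p.1 + p.1 ^ 2 * p.2 = t} =>
      a * p.1.1 + b * p.1.2) :=
  isProperMap_restrict_of_isBounded (isClosed_eq (by fun_prop) continuous_const) (by fun_prop)
    fun _ hK => isBounded_fiber_inter_preimage ha hb hK.isBounded

/-- For a, b ≠ 0 and t ≠ 0, the restriction of L(z,w) = az + bw to the fiber
G⁻¹(t) of G(z,w) = z + z²w is a proper map to ℂ. -/
theorem stmt_6 (a b t : ℂ) (ha : a ≠ 0) (hb : b ≠ 0) (ht : t ≠ 0) :
    IsProperMap (fun p : {p : ℂ × ℂ // p.1 + p.1 ^ 2 * p.2 = t} =>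
      a * p.1.1 + b * p.1.2) :=
  stmt_6_general a b t ha hb
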